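/- Let ℤ[P]^W denote the subring of W-invariant elements of ℤ[P]. The ℤ[P]^W-balanced map ℤ[P] × ℤ[P] → ∏_{w∈W} ℤ[P] sending (a,b) to the family (a·(w·b))_{w∈W} induces a ℤ-linear map ℤ[P] ⊗_{ℤ[P]^W} ℤ[P] → ∏_{w∈W} ℤ[P], and this induced map is injective. -/

import Mathlib

open scoped BigOperators

/-- The multiplicative group structure on `AddAut A` (composition), as it stood in the older
Mathlib, where `AddAut A` was a `Group`; it is now an `AddGroup` instead. -/
instance AddAut.group (A : Type*) [Add A] : Group (AddAut A) where
  mul g h := AddEquiv.trans h g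
  one := AddEquiv.refl _
  inv := AddEquiv.symm
  mul_assoc _ _ _ := rfl
  one_mul _ := rfl
  mul_one _ := rfl
  inv_mul_cancel := AddEquiv.self_trans_symm

namespace AffineKM

/-- An indecomposable generalized Cartan matrix of affine type, together with a
choice of positive integers `(a_i)` and `(a_i^∨)` annihilating it on the right
and on the left. -/
structure AffineData (I : Type) [Fintype I] [DecidableEq I] where
  a : I → I → ℤ
  apos : I → ℤ
  avee : I → ℤ
  diag : ∀ i, a i i = 2
  offdiag_nonpos : ∀ i j, i ≠ j → a i j ≤ 0
  zero_iff : ∀ i j, a i j = 0 ↔ a j i = 0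
  connected : ∀ s : Set I, s.Nonempty → sᶜ.Nonempty → ∃ i ∈ s, ∃ j ∈ sᶜ, a i j ≠ 0
  apos_pos : ∀ i, 0 < apos i
  avee_pos : ∀ i, 0 < avee i
  row_zero : ∀ i, (∑ j, a i j * apos j) = 0
  col_zero : ∀ j, (∑ i, avee i * a i j) = 0

variable {I : Type} [Fintype I] [DecidableEq I]

/-- The weight lattice `P`, free on the `Λ_i` and the `α_i`: the first component
records the coordinates with respect to the basis `{Λ_i}`, the second component the
coordinates with respect to the basis `{α_i}`. -/
abbrev P (I : Type) := (I → ℤ) × (I → ℤ)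

/-- The fundamental weight `Λ_i`. -/
def Lambda (i : I) : P I := (Pi.single i 1, 0)

/-- The simple root `α_i`. -/
def alphaRt (i : I) : P I := (0, Pi.single i 1)

/-- A weight lies in `Q = ⊕ ℤα_i` iff its `Λ`-coordinates vanish. -/
def inQ (lam : P I) : Prop := lam.1 = 0

namespace AffineData

variable (D : AffineData I)

/-- The pairing `⟨h_i, λ⟩` with the simple coroot `h_i`. -/
def coroot (i : I) (lam : P I) : ℤ := lam.1 i + ∑ j, D.a i j * lam.2 j

lemma coroot_add (i : I) (x y : P I) :
    D.coroot i (x + y) = D.coroot i x + D.coroot i y := by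
  simp only [coroot, Prod.fst_add, Prod.snd_add, Pi.add_apply, mul_add,
    Finset.sum_add_distrib]
  ring

lemma coroot_zsmul (i : I) (z : ℤ) (x : P I) :
    D.coroot i (z • x) = z * D.coroot i x := by
  simp only [coroot, Prod.smul_fst, Prod.smul_snd, Pi.smul_apply, smul_eq_mul,
    mul_add, Finset.mul_sum]
  congr 1
  apply Finset.sum_congr rfl
  intro j _
  ring

lemma coroot_alpha_self (i : I) : D.coroot i (alphaRt i) = 2 := by
  simp only [coroot, alphaRt, Pi.zero_apply, zero_add]
  rw [Finset.sum_eq_single i]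
  · simp [D.diag]
  · intro j _ hj
    simp [Pi.single_apply, Ne.symm hj]
  · intro h; exact absurd (Finset.mem_univ i) h

lemma refl_aux (i : I) (lam : P I) :
    (lam - D.coroot i lam • alphaRt i)
      - D.coroot i (lam - D.coroot i lam • alphaRt i) • alphaRt i = lam := by
  have h1 : D.coroot i (lam - D.coroot i lam • alphaRt i)
      = - D.coroot i lam := by
    have h0 := D.coroot_add i (lam - D.coroot i lam • alphaRt i)
      (D.coroot i lam • alphaRt i)
    simp only [sub_add_cancel] at h0
    have h2 : D.coroot i (D.coroot i lam • alphaRt i) = 2 * D.coroot i lam := by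
      rw [D.coroot_zsmul, D.coroot_alpha_self]; ring
    omega
  rw [h1, neg_zsmul]
  abel

/-- The simple reflection `s_i : λ ↦ λ - ⟨h_i,λ⟩ α_i`, as an automorphism of `P`. -/
def refl (i : I) : AddAut (P I) where
  toFun lam := lam - D.coroot i lam • alphaRt i
  invFun lam := lam - D.coroot i lam • alphaRt i
  left_inv lam := D.refl_aux i lam
  right_inv lam := D.refl_aux i lam
  map_add' x y := by
    rw [D.coroot_add, add_zsmul]
    abel

/-- The affine Weyl group, as a subgroup of the automorphism group of `P`. -/
def weyl : Subgroup (AddAut (P I)) := Subgroup.closure (Set.range D.refl)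

/-- The simple reflection `s_i` as an element of the Weyl group. -/
def sgen (i : I) : D.weyl := ⟨D.refl i, Subgroup.subset_closure ⟨i, rfl⟩⟩

/-- The length of an element of the Weyl group: the minimal length of an
expression as a product of simple reflections. -/
noncomputable def len (w : D.weyl) : ℕ :=
  sInf {n | ∃ l : List I, l.length = n ∧ (w : AddAut (P I)) = (l.map D.refl).prod}

/-- The null root `δ = Σ a_i α_i`. -/
def delta : P I := (0, D.apos)

/-- The pairing `⟨c, λ⟩` with the canonical central element `c = Σ a_i^∨ h_i`. -/
def cpair (lam : P I) : ℤ := ∑ i, D.avee i * D.coroot i lam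

/-- The dual Coxeter number `κ* = ⟨c, ρ⟩ = Σ a_i^∨`. -/
def kstar : ℤ := ∑ i, D.avee i

/-- λ ∈ P is regular if `⟨c,λ⟩ ≠ 0` and `⟨h_i, wλ⟩ ≠ 0` for all `w ∈ W`, `i ∈ I`. -/
def IsRegularWt (lam : P I) : Prop :=
  D.cpair lam ≠ 0 ∧ ∀ w ∈ D.weyl, ∀ i : I, D.coroot i (w lam) ≠ 0

/-- The `W`-orbit of a weight. -/
def orb (lam : P I) : Set (P I) := {mu | ∃ w ∈ D.weyl, w lam = mu}

end AffineData

/-- The group algebra `ℤ[P]`. -/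
abbrev ZP (I : Type) [Fintype I] [DecidableEq I] := AddMonoidAlgebra ℤ (P I)

/-- The basis element `e^λ` of `ℤ[P]`. -/
noncomputable def expw (lam : P I) : ZP I := AddMonoidAlgebra.single lam 1

/-- The action of an automorphism `w` of `P` on the group algebra `ℤ[P]`,
`e^λ ↦ e^{wλ}`, as a ring homomorphism. -/
noncomputable def wact (w : AddAut (P I)) : ZP I →+* ZP I :=
  AddMonoidAlgebra.mapDomainRingHom ℤ w.toAddMonoidHom

lemma wact_single (w : AddAut (P I)) (lam : P I) (c : ℤ) :
    wact w (AddMonoidAlgebra.single lam c) = AddMonoidAlgebra.single (w lam) c := by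
  simp [wact, AddMonoidAlgebra.mapDomainRingHom, Finsupp.mapDomain_single]


namespace AffineData

variable (D : AffineData I)

lemma coroot_delta (i : I) : D.coroot i D.delta = 0 := by
  simp only [coroot, delta, Pi.zero_apply, zero_add]
  exact D.row_zero i

lemma refl_apply (i : I) (lam : P I) :
    D.refl i lam = lam - D.coroot i lam • alphaRt i := rfl

lemma refl_delta (i : I) : D.refl i D.delta = D.delta := by
  rw [refl_apply, D.coroot_delta, zero_zsmul, sub_zero]

lemma weyl_fix_delta {w : AddAut (P I)} (hw : w ∈ D.weyl) : w D.delta = D.delta := by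
  induction hw using Subgroup.closure_induction with
  | mem x hx => obtain ⟨i, rfl⟩ := hx; exact D.refl_delta i
  | one => rfl
  | mul x y hx hy ihx ihy =>
      show x (y D.delta) = D.delta
      rw [ihy, ihx]
  | inv x hx ih =>
      show x.symm D.delta = D.delta
      rw [AddEquiv.symm_apply_eq]
      exact ih.symm

lemma weyl_fix_zsmul_delta {w : AddAut (P I)} (hw : w ∈ D.weyl) (n : ℤ) :
    w (n • D.delta) = n • D.delta := by
  rw [map_zsmul, D.weyl_fix_delta hw]

/-- The multiplicative set generated by the elements `e^{nδ} - 1`, `n ≥ 1`; `R ⊗_{ℤ[q,q⁻¹]} ℤ[P]`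
is realized as the localization of `ℤ[P]` at this set. -/
noncomputable def denomSet : Submonoid (ZP I) :=
  Submonoid.closure {x | ∃ n : ℤ, 0 < n ∧ x = expw (n • D.delta) - 1}

/-- `R ⊗_{ℤ[q,q⁻¹]} ℤ[P]`, realized as the localization of `ℤ[P]` at the
multiplicative set generated by the `e^{nδ} - 1`, `n ≥ 1` (note that `q = e^δ` is
already invertible in this ring). -/
noncomputable abbrev locZP := Localization D.denomSet

lemma wact_denom {w : AddAut (P I)} (hw : w ∈ D.weyl) :
    D.denomSet ≤ Submonoid.comap (wact w) D.denomSet := by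
  rw [denomSet, Submonoid.closure_le]
  intro x hx
  obtain ⟨n, hn, rfl⟩ := hx
  simp only [Submonoid.coe_comap, Set.mem_preimage, SetLike.mem_coe]
  have : wact w (expw (n • D.delta) - 1) = expw (n • D.delta) - 1 := by
    rw [map_sub, map_one, expw, wact_single, D.weyl_fix_zsmul_delta hw]
  rw [this]
  exact Submonoid.subset_closure ⟨n, hn, rfl⟩

/-- The action of `w ∈ W` on `R ⊗_{ℤ[q,q⁻¹]} ℤ[P]`. -/
noncomputable def wactM (w : D.weyl) : D.locZP →+* D.locZP :=
  IsLocalization.map (Localization D.denomSet) (wact (w : AddAut (P I)))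
    (D.wact_denom w.2)

end AffineData

/-- The projection `P = L ⊕ Q → Q`, as an additive homomorphism. -/
def projQ : P I →+ P I where
  toFun lam := (0, lam.2)
  map_zero' := rfl
  map_add' x y := by simp [Prod.ext_iff]

/-- The ring homomorphism `j_e : ℤ[P] → ℤ[Q] ⊆ ℤ[P]`, `e^{λ+α} ↦ e^α` for
`λ ∈ L`, `α ∈ Q`. -/
noncomputable def jeRing : ZP I →+* ZP I :=
  AddMonoidAlgebra.mapDomainRingHom ℤ (projQ (I := I))

/-- The ℤ-linear map `j_w : ℤ[P] → ℤ[Q] ⊆ ℤ[P]`, `e^{λ+α} ↦ e^{w(λ+α)-λ}` for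
`λ ∈ L`, `α ∈ Q`. -/
noncomputable def jmap (w : AddAut (P I)) (u : ZP I) : ZP I :=
  AddMonoidAlgebra.ofCoeff (Finsupp.mapDomain (fun mu => w mu - (mu.1, 0)) u.coeff)

namespace AffineData

variable (D : AffineData I)

lemma je_denom : D.denomSet ≤ Submonoid.comap (jeRing (I := I)) D.denomSet := by
  rw [denomSet, Submonoid.closure_le]
  intro x hx
  obtain ⟨n, hn, rfl⟩ := hx
  simp only [Submonoid.coe_comap, Set.mem_preimage, SetLike.mem_coe]
  have h1 : jeRing (expw (n • D.delta) - 1) = expw (n • D.delta) - 1 := by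
    rw [map_sub, map_one, expw, jeRing]
    have : AddMonoidAlgebra.mapDomainRingHom ℤ (projQ (I := I))
        (AddMonoidAlgebra.single (n • D.delta) 1)
        = AddMonoidAlgebra.single (projQ (n • D.delta)) (1 : ℤ) := by
      simp [AddMonoidAlgebra.mapDomainRingHom, Finsupp.mapDomain_single]
    rw [this]
    have h2 : projQ (n • D.delta) = n • D.delta := by
      show ((0 : I → ℤ), (n • D.delta).2) = n • D.delta
      simp [delta, Prod.ext_iff]
    rw [h2]
  rw [h1]
  exact Submonoid.subset_closure ⟨n, hn, rfl⟩

/-- The `R`-linear extension of `j_e` to `R ⊗_{ℤ[q,q⁻¹]} ℤ[P]`, with values in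
`R ⊗_{ℤ[q,q⁻¹]} ℤ[Q] ⊆ R ⊗_{ℤ[q,q⁻¹]} ℤ[P]`. -/
noncomputable def jeLoc : D.locZP →+* D.locZP :=
  IsLocalization.map (Localization D.denomSet) (jeRing (I := I)) D.je_denom

end AffineData


/-- The subring `ℤ[P]^W` of `W`-invariant elements of `ℤ[P]`. -/
noncomputable def invSubring (D : AffineData I) : Subring (ZP I) where
  carrier := {u : ZP I | ∀ w ∈ D.weyl, wact w u = u}
  zero_mem' := by intro w hw; simp
  one_mem' := by intro w hw; simp
  add_mem' := by intro x y hx hy w hw; rw [map_add, hx w hw, hy w hw]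
  mul_mem' := by intro x y hx hy w hw; rw [map_mul, hx w hw, hy w hw]
  neg_mem' := by intro x hx w hw; rw [map_neg, hx w hw]

/-! ### Auxiliary material for the proof of Lemma 4.2 -/

/-- The action of `AddAut A` on `A` by application. -/
instance addAutApplyMulAction (A : Type*) [Add A] : MulAction (AddAut A) A where
  smul f a := f a
  one_smul _ := rfl
  mul_smul _ _ _ := rfl

namespace AffineData

variable (D : AffineData I)

lemma coroot_neg (i : I) (x : P I) : D.coroot i (-x) = - D.coroot i x := by
  have := D.coroot_zsmul i (-1) x
  simpa using this

lemma coroot_sub (i : I) (x y : P I) :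
    D.coroot i (x - y) = D.coroot i x - D.coroot i y := by
  rw [sub_eq_add_neg, D.coroot_add, D.coroot_neg]; ring

/-- The coordinates of a weight with respect to the coroots. -/
def hvec (μ : P I) : I → ℤ := fun i => D.coroot i μ

open Classical in
/-- A choice of representative for each coroot-coordinate vector. -/
noncomputable def sfun (v : I → ℤ) : P I :=
  if hv : ∃ μ : P I, D.hvec μ = v then hv.choose else 0

lemma sfun_spec {v : I → ℤ} (hv : ∃ μ : P I, D.hvec μ = v) :
    D.hvec (D.sfun v) = v := by
  unfold sfun
  rw [dif_pos hv]
  exact hv.choose_spec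

lemma coroot_sub_sfun (μ : P I) : ∀ i, D.coroot i (μ - D.sfun (D.hvec μ)) = 0 := by
  intro i
  have h : D.hvec (D.sfun (D.hvec μ)) = D.hvec μ := D.sfun_spec ⟨μ, rfl⟩
  have h2 : D.coroot i (D.sfun (D.hvec μ)) = D.coroot i μ := congrFun h i
  rw [D.coroot_sub, h2, sub_self]

lemma refl_fix {μ : P I} (hμ : ∀ i, D.coroot i μ = 0) (i : I) : D.refl i μ = μ := by
  rw [refl_apply, hμ i, zero_zsmul, sub_zero]

lemma weyl_fix {μ : P I} (hμ : ∀ i, D.coroot i μ = 0) {w : AddAut (P I)}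
    (hw : w ∈ D.weyl) : w μ = μ := by
  induction hw using Subgroup.closure_induction with
  | mem x hx => obtain ⟨i, rfl⟩ := hx; exact D.refl_fix hμ i
  | one => rfl
  | mul x y hx hy ihx ihy =>
      show x (y μ) = μ
      rw [ihy, ihx]
  | inv x hx ih =>
      show x.symm μ = μ
      rw [AddEquiv.symm_apply_eq]
      exact ih.symm

lemma single_mem_inv {f : P I} (hf : ∀ i, D.coroot i f = 0) (c : ℤ) :
    (AddMonoidAlgebra.single f c : ZP I) ∈ invSubring D := by
  intro w hw
  rw [wact_single, D.weyl_fix hf hw]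

lemma fst_refl (i : I) (μ : P I) : (D.refl i μ).1 = μ.1 := by
  show (μ - D.coroot i μ • alphaRt i).1 = μ.1
  simp [alphaRt]

lemma fst_weyl {w : AddAut (P I)} (hw : w ∈ D.weyl) :
    ∀ μ : P I, (w μ).1 = μ.1 := by
  induction hw using Subgroup.closure_induction with
  | mem x hx => obtain ⟨i, rfl⟩ := hx; exact fun μ => D.fst_refl i μ
  | one => exact fun μ => rfl
  | mul x y hx hy ihx ihy =>
      intro μ
      show (x (y μ)).1 = μ.1
      rw [ihx, ihy]
  | inv x hx ih =>
      intro μ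
      have h1 : (x (x⁻¹ μ)).1 = (x⁻¹ μ).1 := ih (x⁻¹ μ)
      have h2 : x (x⁻¹ μ) = μ := x.apply_symm_apply μ
      rw [h2] at h1
      exact h1.symm

/-- The `a_i^∨`-weighted sum of the `α`-coordinates. -/
def philev (μ : P I) : ℤ := ∑ i, D.avee i * μ.2 i

lemma philev_refl (i : I) (μ : P I) :
    D.philev (D.refl i μ) = D.philev μ - D.coroot i μ * D.avee i := by
  have hco : ∀ j, (D.refl i μ).2 j = μ.2 j - D.coroot i μ * (Pi.single i (1:ℤ) : I → ℤ) j := by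
    intro j
    show (μ - D.coroot i μ • alphaRt i).2 j = _
    simp [alphaRt, mul_comm]
  simp only [philev, hco, mul_sub, Finset.sum_sub_distrib]
  congr 1
  have : ∀ j, D.avee j * (D.coroot i μ * (Pi.single i (1:ℤ) : I → ℤ) j)
      = (if j = i then D.coroot i μ * D.avee i else 0) := by
    intro j
    by_cases hji : j = i
    · subst hji; simp [Pi.single_apply]; ring
    · simp [Pi.single_apply, hji]
  simp only [this]
  simp

lemma sum_avee_coroot (μ : P I) :
    ∑ i, D.avee i * D.coroot i μ = ∑ i, D.avee i * μ.1 i := by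
  simp only [coroot, mul_add, Finset.sum_add_distrib]
  have hz : ∑ i, D.avee i * ∑ j, D.a i j * μ.2 j = 0 := by
    calc ∑ i, D.avee i * ∑ j, D.a i j * μ.2 j
        = ∑ i, ∑ j, D.avee i * D.a i j * μ.2 j := by
          simp [Finset.mul_sum, mul_assoc]
      _ = ∑ j, ∑ i, D.avee i * D.a i j * μ.2 j := Finset.sum_comm
      _ = ∑ j, (∑ i, D.avee i * D.a i j) * μ.2 j := by
          simp [Finset.sum_mul]
      _ = 0 := by
          refine Finset.sum_eq_zero fun j _ => ?_
          rw [D.col_zero j, zero_mul]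
  rw [hz, add_zero]

lemma orbit_mem_refl {ν μ : P I} (hμ : μ ∈ MulAction.orbit (↥D.weyl) ν) (i : I) :
    D.refl i μ ∈ MulAction.orbit (↥D.weyl) ν := by
  obtain ⟨w, rfl⟩ := hμ
  exact ⟨D.sgen i * w, rfl⟩

lemma coroot_eq_zero_of_orbit_finite {ν : P I}
    (hfin : (MulAction.orbit (↥D.weyl) ν).Finite) (i : I) : D.coroot i ν = 0 := by
  classical
  set O := hfin.toFinset with hO
  have hmemO : ∀ μ, μ ∈ O ↔ μ ∈ MulAction.orbit (↥D.weyl) ν := by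
    intro μ; simp [hO]
  have hne : O.Nonempty := ⟨ν, (hmemO ν).2 (MulAction.mem_orbit_self ν)⟩
  obtain ⟨μmax, hmax_mem, hmax⟩ := O.exists_max_image D.philev hne
  obtain ⟨μmin, hmin_mem, hmin⟩ := O.exists_min_image D.philev hne
  have hdom : ∀ j, 0 ≤ D.coroot j μmax := by
    intro j
    have h1 : D.philev (D.refl j μmax) ≤ D.philev μmax :=
      hmax _ ((hmemO _).2 (D.orbit_mem_refl ((hmemO _).1 hmax_mem) j))
    rw [D.philev_refl] at h1
    nlinarith [D.avee_pos j]
  have hantidom : ∀ j, D.coroot j μmin ≤ 0 := by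
    intro j
    have h1 : D.philev μmin ≤ D.philev (D.refl j μmin) :=
      hmin _ ((hmemO _).2 (D.orbit_mem_refl ((hmemO _).1 hmin_mem) j))
    rw [D.philev_refl] at h1
    nlinarith [D.avee_pos j]
  have hfst : ∀ μ ∈ O, μ.1 = ν.1 := by
    intro μ hμ
    obtain ⟨w, rfl⟩ := (hmemO μ).1 hμ
    exact D.fst_weyl w.2 ν
  have hsum_max := D.sum_avee_coroot μmax
  have hsum_min := D.sum_avee_coroot μmin
  rw [hfst μmax hmax_mem] at hsum_max
  rw [hfst μmin hmin_mem] at hsum_min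
  have hnonneg : ∀ k ∈ (Finset.univ : Finset I), 0 ≤ D.avee k * D.coroot k μmax :=
    fun k _ => mul_nonneg (le_of_lt (D.avee_pos k)) (hdom k)
  have hzero : ∑ k, D.avee k * D.coroot k μmax = 0 := by
    have hge : 0 ≤ ∑ k, D.avee k * D.coroot k μmax := Finset.sum_nonneg hnonneg
    have hle : ∑ k, D.avee k * D.coroot k μmin ≤ 0 :=
      Finset.sum_nonpos fun k _ =>
        mul_nonpos_of_nonneg_of_nonpos (le_of_lt (D.avee_pos k)) (hantidom k)
    omega
  have hc : ∀ k, D.coroot k μmax = 0 := by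
    intro k
    have h1 := (Finset.sum_eq_zero_iff_of_nonneg hnonneg).1 hzero k (Finset.mem_univ k)
    have h2 := D.avee_pos k
    exact (mul_eq_zero.1 h1).resolve_left (by omega)
  obtain ⟨w, hw⟩ := (hmemO μmax).1 hmax_mem
  have hfixed : (w : AddAut (P I))⁻¹ μmax = μmax :=
    D.weyl_fix hc (D.weyl.inv_mem w.2)
  have hwν : (w : AddAut (P I)) ν = μmax := hw
  have hν : ν = μmax := by
    have h3 : (w : AddAut (P I))⁻¹ ((w : AddAut (P I)) ν) = ν :=
        (w : AddAut (P I)).symm_apply_apply ν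
    rw [hwν, hfixed] at h3
    exact h3.symm
  rw [hν]; exact hc i

open scoped Pointwise in
lemma exists_avoid {κ : Type} (s : Finset κ) (νf ηf : κ → P I)
    (hν : ∀ p ∈ s, ∃ i, D.coroot i (νf p) ≠ 0) :
    ∃ w : ↥D.weyl, ∀ p ∈ s, (w : AddAut (P I)) (νf p) ≠ ηf p := by
  classical
  by_contra hcon
  push_neg at hcon
  set G := ↥D.weyl
  have hcon' : ∀ w : G, ∃ p ∈ s, w • (νf p) = ηf p := hcon
  let H : κ → Subgroup G := fun p => MulAction.stabilizer G (νf p)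
  let gg : κ → G := fun p => if hp : ∃ w' : G, w' • (νf p) = ηf p then hp.choose else 1
  have hcovers : ⋃ p ∈ s, (gg p) • (H p : Set G) = Set.univ := by
    rw [Set.eq_univ_iff_forall]
    intro w
    obtain ⟨p, hps, hpe⟩ := hcon' w
    have hex : ∃ w' : G, w' • (νf p) = ηf p := ⟨w, hpe⟩
    have hg : (gg p) • (νf p) = ηf p := by
      simp only [gg, dif_pos hex]
      exact hex.choose_spec
    refine Set.mem_biUnion hps ?_
    rw [mem_leftCoset_iff, SetLike.mem_coe, MulAction.mem_stabilizer_iff, mul_smul, hpe,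
      inv_smul_eq_iff]
    exact hg.symm
  obtain ⟨p, hps, hfi⟩ := Subgroup.exists_finiteIndex_of_leftCoset_cover hcovers
  have hfq : Fintype (G ⧸ H p) := Subgroup.fintypeOfIndexNeZero hfi.index_ne_zero
  have hfin1 : Finite (G ⧸ H p) := hfq.finite
  have hfin2 : Finite (MulAction.orbit G (νf p)) :=
    Finite.of_equiv _ (MulAction.orbitEquivQuotientStabilizer G (νf p)).symm
  have horb : (MulAction.orbit G (νf p)).Finite := Set.toFinite _
  obtain ⟨i, hi⟩ := hν p hps
  exact hi (D.coroot_eq_zero_of_orbit_finite horb i)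

open scoped TensorProduct

/-- Tensoring on the left with `e^{s(v)}` on the right, as an additive map. -/
noncomputable def tmulE (v : I → ℤ) : ZP I →+ (ZP I ⊗[invSubring D] ZP I) where
  toFun a := a ⊗ₜ[invSubring D] expw (D.sfun v)
  map_zero' := TensorProduct.zero_tmul _ _
  map_add' a b := TensorProduct.add_tmul a b _

/-- Assembling a family of coefficients into an element of the tensor product. -/
noncomputable def Phi : ((I → ℤ) →₀ ZP I) →+ (ZP I ⊗[invSubring D] ZP I) :=
  Finsupp.liftAddHom (fun v => D.tmulE v)

lemma Phi_single (v : I → ℤ) (z : ZP I) :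
    D.Phi (Finsupp.single v z) = z ⊗ₜ[invSubring D] expw (D.sfun v) :=
  Finsupp.liftAddHom_apply_single _ _ _

lemma Phi_apply (g : (I → ℤ) →₀ ZP I) :
    D.Phi g = ∑ v ∈ g.support, (g v) ⊗ₜ[invSubring D] expw (D.sfun v) :=
  Finsupp.liftAddHom_apply _ _

set_option synthInstance.maxHeartbeats 1000000 in
lemma phi_surj (x : ZP I ⊗[invSubring D] ZP I) :
    ∃ g : (I → ℤ) →₀ ZP I, (∀ v ∈ g.support, D.hvec (D.sfun v) = v) ∧ D.Phi g = x := by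
  classical
  induction x with
  | zero => exact ⟨0, by simp, by simp⟩
  | tmul a b =>
      refine ⟨b.coeff.sum (fun μ c => Finsupp.single (D.hvec μ)
        (((⟨AddMonoidAlgebra.single (μ - D.sfun (D.hvec μ)) c,
          D.single_mem_inv (D.coroot_sub_sfun μ) c⟩ : invSubring D)) • a)), ?_, ?_⟩
      · intro v hv
        obtain ⟨μ, hμ, hv2⟩ := Finset.mem_biUnion.1 (Finsupp.support_sum hv)
        have hv3 := Finsupp.support_single_subset hv2
        rw [Finset.mem_singleton] at hv3
        subst hv3
        exact D.sfun_spec ⟨μ, rfl⟩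
      · rw [map_finsuppSum]
        have hterm : ∀ μ c,
            D.Phi (Finsupp.single (D.hvec μ)
              (((⟨AddMonoidAlgebra.single (μ - D.sfun (D.hvec μ)) c,
                D.single_mem_inv (D.coroot_sub_sfun μ) c⟩ : invSubring D)) • a))
            = a ⊗ₜ[invSubring D] AddMonoidAlgebra.single μ c := by
          intro μ c
          rw [Phi_single, TensorProduct.smul_tmul]
          congr 1
          show (AddMonoidAlgebra.single (μ - D.sfun (D.hvec μ)) c : ZP I)
              * expw (D.sfun (D.hvec μ)) = AddMonoidAlgebra.single μ c
          rw [expw, AddMonoidAlgebra.single_mul_single, mul_one, sub_add_cancel]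
        calc Finsupp.sum b.coeff (fun μ c => D.Phi (Finsupp.single (D.hvec μ)
              (((⟨AddMonoidAlgebra.single (μ - D.sfun (D.hvec μ)) c,
                D.single_mem_inv (D.coroot_sub_sfun μ) c⟩ : invSubring D)) • a)))
            = Finsupp.sum b.coeff
                (fun μ c => a ⊗ₜ[invSubring D] AddMonoidAlgebra.single μ c) :=
              Finsupp.sum_congr (fun μ _ => hterm μ (b.coeff μ))
          _ = a ⊗ₜ[invSubring D]
                (Finsupp.sum b.coeff fun μ c => AddMonoidAlgebra.single μ c) := by
              rw [Finsupp.sum, Finsupp.sum, TensorProduct.tmul_sum]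
          _ = a ⊗ₜ[invSubring D] b := by rw [AddMonoidAlgebra.sum_coeff_single]
  | add x y ihx ihy =>
      obtain ⟨g1, h1, e1⟩ := ihx
      obtain ⟨g2, h2, e2⟩ := ihy
      refine ⟨g1 + g2, ?_, by rw [map_add, e1, e2]⟩
      intro v hv
      rcases Finset.mem_union.1 (Finsupp.support_add hv) with h | h
      · exact h1 v h
      · exact h2 v h

end AffineData

open scoped TensorProduct in
/-- Lemma 4.2: the `ℤ[P]^W`-balanced map `ℤ[P] × ℤ[P] → ∏_{w∈W} ℤ[P]`,
`(a,b) ↦ (a · (w·b))_{w∈W}`, induces an injective ℤ-linear map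
`ℤ[P] ⊗_{ℤ[P]^W} ℤ[P] → ∏_{w∈W} ℤ[P]`. -/
theorem borel_map_injective (D : AffineData I)
    (T : (ZP I ⊗[invSubring D] ZP I) →+ (D.weyl → ZP I))
    (hT : ∀ a b : ZP I, T (a ⊗ₜ[invSubring D] b)
      = fun w : D.weyl => a * wact (w : AddAut (P I)) b) :
    Function.Injective T := by
  classical
  rw [injective_iff_map_eq_zero]
  intro x hx
  obtain ⟨g, hgsup, rfl⟩ := D.phi_surj x
  suffices hg : g = 0 by rw [hg, map_zero]
  have hTw : ∀ w : ↥D.weyl, ∑ v ∈ g.support,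
      g v * AddMonoidAlgebra.single ((w : AddAut (P I)) (D.sfun v)) (1:ℤ) = 0 := by
    intro w
    have h1 : T (D.Phi g) w = 0 := congrFun hx w
    rw [D.Phi_apply, map_sum, Finset.sum_apply] at h1
    calc ∑ v ∈ g.support,
          g v * AddMonoidAlgebra.single ((w : AddAut (P I)) (D.sfun v)) (1:ℤ)
        = ∑ v ∈ g.support, (T ((g v) ⊗ₜ[invSubring D] expw (D.sfun v))) w := by
          refine Finset.sum_congr rfl fun v _ => ?_
          rw [hT]
          show g v * AddMonoidAlgebra.single _ 1
              = g v * wact (w : AddAut (P I)) (expw (D.sfun v))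
          rw [expw, wact_single]
      _ = 0 := h1
  by_contra hgne
  obtain ⟨v₀, hv₀⟩ := Finsupp.support_nonempty_iff.2 hgne
  obtain ⟨μ₀, hμ₀⟩ :=
    Finsupp.support_nonempty_iff.2
        (by simpa using Finsupp.mem_support_iff.1 hv₀ : (g v₀).coeff ≠ 0)
  set S : Finset ((I → ℤ) × P I) :=
    g.support.biUnion (fun v => (g v).coeff.support.image (fun μ => (v, μ))) with hSdef
  have hmemS : ∀ v μ, (v, μ) ∈ S ↔ v ∈ g.support ∧ μ ∈ (g v).coeff.support := by
    intro v μ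
    simp only [hSdef, Finset.mem_biUnion, Finset.mem_image]
    constructor
    · rintro ⟨v', hv', μ', hμ', heq⟩
      rw [Prod.mk.injEq] at heq
      obtain ⟨rfl, rfl⟩ := heq
      exact ⟨hv', hμ'⟩
    · rintro ⟨h1, h2⟩
      exact ⟨v, h1, μ, h2, rfl⟩
  set Pr : Finset (((I → ℤ) × P I) × ((I → ℤ) × P I)) :=
    (S ×ˢ S).filter (fun pq => pq.1.1 ≠ pq.2.1) with hPrdef
  have hνgood : ∀ pq ∈ Pr, ∃ i, D.coroot i (D.sfun pq.1.1 - D.sfun pq.2.1) ≠ 0 := by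
    intro pq hpq
    rw [hPrdef, Finset.mem_filter, Finset.mem_product] at hpq
    obtain ⟨⟨hp1, hp2⟩, hne⟩ := hpq
    by_contra hall
    push_neg at hall
    apply hne
    have e1 : D.hvec (D.sfun pq.1.1) = pq.1.1 :=
      hgsup _ ((hmemS pq.1.1 pq.1.2).1 (by simpa using hp1)).1
    have e2 : D.hvec (D.sfun pq.2.1) = pq.2.1 :=
      hgsup _ ((hmemS pq.2.1 pq.2.2).1 (by simpa using hp2)).1
    funext i
    have h3 := hall i
    rw [D.coroot_sub, sub_eq_zero] at h3
    calc pq.1.1 i = D.hvec (D.sfun pq.1.1) i := (congrFun e1 i).symm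
      _ = D.coroot i (D.sfun pq.1.1) := rfl
      _ = D.coroot i (D.sfun pq.2.1) := h3
      _ = D.hvec (D.sfun pq.2.1) i := rfl
      _ = pq.2.1 i := congrFun e2 i
  obtain ⟨w, hw⟩ := D.exists_avoid Pr (fun pq => D.sfun pq.1.1 - D.sfun pq.2.1)
      (fun pq => pq.2.2 - pq.1.2) hνgood
  have heval : (∑ v ∈ g.support,
      g v * AddMonoidAlgebra.single ((w : AddAut (P I)) (D.sfun v)) (1:ℤ)).coeff
        (μ₀ + (w : AddAut (P I)) (D.sfun v₀)) = 0 := by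
    rw [hTw w]; rfl
  rw [AddMonoidAlgebra.coeff_sum, Finsupp.finset_sum_apply] at heval
  have hsingle : ∀ v ∈ g.support, v ≠ v₀ →
      (g v * AddMonoidAlgebra.single ((w : AddAut (P I)) (D.sfun v)) (1:ℤ)).coeff
        (μ₀ + (w : AddAut (P I)) (D.sfun v₀)) = 0 := by
    intro v hv hne
    rw [AddMonoidAlgebra.coeff_mul_single_apply, mul_one]
    by_contra hnz
    set μ := μ₀ + (w : AddAut (P I)) (D.sfun v₀) - (w : AddAut (P I)) (D.sfun v)
      with hμdef
    have hμs : μ ∈ (g v).coeff.support := Finsupp.mem_support_iff.2 hnz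
    have hpair : ((v, μ), (v₀, μ₀)) ∈ Pr := by
      rw [hPrdef, Finset.mem_filter, Finset.mem_product]
      exact ⟨⟨(hmemS v μ).2 ⟨hv, hμs⟩, (hmemS v₀ μ₀).2 ⟨hv₀, hμ₀⟩⟩, hne⟩
    apply hw _ hpair
    show (w : AddAut (P I)) (D.sfun v - D.sfun v₀) = μ₀ - μ
    rw [map_sub, hμdef]
    abel
  rw [Finset.sum_eq_single_of_mem v₀ hv₀ hsingle,
    AddMonoidAlgebra.coeff_mul_single_apply, mul_one, add_neg_cancel_right] at heval
  exact (Finsupp.mem_support_iff.1 hμ₀) heval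

end AffineKM
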